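/- There exists a universal constant C such that for every distribution P in Flat_N ∪ Geo_N ∪ Bin_N, the capacity satisfies 𝒞(P) ≤ H(P) + C. In particular, for flat P one has 𝒞(P) ≤ H(P). -/
import Mathlib

/-- Finite binary strings `{0,1}*`. -/
abbrev Str := List Bool

/-- A probability distribution on `[N] = Fin N` (arbitrary support). -/
def IsDistNN {N : ℕ} (P : Fin N → ℝ) : Prop :=
  (∀ m, 0 ≤ P m) ∧ ∑ m, P m = 1

/-- `P` and `Q` are `Δ`-close: they have a common support and
`|log₂(P(m)/Q(m))| ≤ Δ` for every `m` in that support. -/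
def CloseNN {N : ℕ} (Δ : ℝ) (P Q : Fin N → ℝ) : Prop :=
  ∀ m, (P m = 0 ↔ Q m = 0) ∧ (0 < P m → |Real.logb 2 (P m / Q m)| ≤ Δ)

/-- The binary entropy `H(P) = Σ_m P(m) log₂(1/P(m))`. -/
noncomputable def entropy {N : ℕ} (P : Fin N → ℝ) : ℝ :=
  ∑ m, P m * Real.logb 2 (1 / P m)

/-- The iterated logarithm `log* N`. -/
noncomputable def logStar (N : ℕ) : ℕ :=
  sInf {i : ℕ | (Real.logb 2)^[i] (N : ℝ) ≤ 1}

/-- `P` is flat: uniform on its support. -/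
def IsFlat {N : ℕ} (P : Fin N → ℝ) : Prop :=
  ∃ S : Finset (Fin N), S.Nonempty ∧
    ∀ m, P m = if m ∈ S then ((S.card : ℝ))⁻¹ else 0

/-- `P` is geometric: for some `α ∈ (0,1)` and permutation `π` of `[N]`,
`P(π(k+1)) = α·P(π(k))` for all `k ∈ [N−1]`. -/
def IsGeo {N : ℕ} (P : Fin N → ℝ) : Prop :=
  ∃ α : ℝ, 0 < α ∧ α < 1 ∧ ∃ π : Equiv.Perm (Fin N),
    ∀ (k : ℕ) (h : k + 1 < N),
      P (π ⟨k + 1, h⟩) = α * P (π ⟨k, Nat.lt_of_succ_lt h⟩)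

/-- `P` is binomial: for some `p ∈ (0,1)` and permutation `π` of `[N]`,
`P(π(k)) = C(N,k)·p^k·(1−p)^{N−k}` for all `k ∈ [N]` (here `k` is the
`1`-based index of the vertex `π(k)`). -/
def IsBin {N : ℕ} (P : Fin N → ℝ) : Prop :=
  ∃ p : ℝ, 0 < p ∧ p < 1 ∧ ∃ π : Equiv.Perm (Fin N),
    ∀ k : Fin N, P (π k) =
      (N.choose ((k : ℕ) + 1) : ℝ) * p ^ ((k : ℕ) + 1) *
        (1 - p) ^ (N - ((k : ℕ) + 1))

/-- The family `ℱ = Flat_N ∪ Geo_N ∪ Bin_N`. -/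
def InNatFam {N : ℕ} (P : Fin N → ℝ) : Prop := IsFlat P ∨ IsGeo P ∨ IsBin P

/-- The family `ℱ`, as a type of distributions. -/
def NatDist (N : ℕ) : Type := {P : Fin N → ℝ // IsDistNN P ∧ InNatFam P}

/-- `U` is a unit set of `P`: a subset of the support on which any two
probabilities differ by at most a factor of `2` (in base-2 logarithm). -/
def IsUnitSet {N : ℕ} (P : Fin N → ℝ) (U : Finset (Fin N)) : Prop :=
  (∀ m ∈ U, 0 < P m) ∧
  ∀ m₁ ∈ U, ∀ m₂ ∈ U, |Real.logb 2 (P m₁) - Real.logb 2 (P m₂)| ≤ 1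

/-- The capacity `𝒞(P)`: the least `c ∈ ℝ` such that every unit set of `P`
has size at most `2^c`. -/
noncomputable def capacity {N : ℕ} (P : Fin N → ℝ) : ℝ :=
  sInf {c : ℝ | ∀ U : Finset (Fin N), IsUnitSet P U → (U.card : ℝ) ≤ (2 : ℝ) ^ c}

/- ### Auxiliary lemmas -/

lemma aux_exists_pos {N : ℕ} {P : Fin N → ℝ} (hP : IsDistNN P) : ∃ m, 0 < P m := by
  by_contra h
  push_neg at h
  have hz : ∀ m, P m = 0 := fun m => le_antisymm (h m) (hP.1 m)
  have h0 : ∑ m, P m = (0 : ℝ) := Finset.sum_eq_zero fun m _ => hz m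
  rw [hP.2] at h0
  norm_num at h0

/-- The main tool: if every unit set has real cardinality at most `B`, then
the capacity is at most `log₂ B`. -/
lemma aux_capacity_le_logb {N : ℕ} {P : Fin N → ℝ} (hP : IsDistNN P) {B : ℝ}
    (hB : ∀ U : Finset (Fin N), IsUnitSet P U → (U.card : ℝ) ≤ B) :
    capacity P ≤ Real.logb 2 B := by
  obtain ⟨m, hm⟩ := aux_exists_pos hP
  have hunit : IsUnitSet P {m} := by
    constructor
    · intro x hx; simp at hx; subst hx; exact hm
    · intro x hx y hy; simp at hx hy; subst hx; subst hy; simp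
  have hB1 : (1 : ℝ) ≤ B := by simpa using hB {m} hunit
  have hBpos : 0 < B := lt_of_lt_of_le one_pos hB1
  apply csInf_le
  · refine ⟨0, fun c hc => ?_⟩
    by_contra hneg
    push_neg at hneg
    have h1 : (1 : ℝ) ≤ (2 : ℝ) ^ c := by simpa using hc {m} hunit
    have : (2 : ℝ) ^ c < (2 : ℝ) ^ (0 : ℝ) :=
      (Real.rpow_lt_rpow_left_iff one_lt_two).2 hneg
    rw [Real.rpow_zero] at this
    linarith
  · intro U hU
    rw [Real.rpow_logb two_pos (by norm_num) hBpos]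
    exact hB U hU

/- ### Flat case -/

lemma aux_flat {N : ℕ} {P : Fin N → ℝ} (hP : IsDistNN P) (hF : IsFlat P) :
    capacity P ≤ entropy P := by
  obtain ⟨S, hSne, hPdef⟩ := hF
  have hcard : (0 : ℝ) < S.card := by
    exact_mod_cast Finset.card_pos.2 hSne
  have hent : entropy P = Real.logb 2 S.card := by
    have hpt : ∀ m, P m * Real.logb 2 (1 / P m) =
        if m ∈ S then ((S.card : ℝ))⁻¹ * Real.logb 2 S.card else 0 := by
      intro m
      rw [hPdef m]
      by_cases h : m ∈ S <;> simp [h, one_div, inv_inv]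
    rw [entropy]
    simp_rw [hpt]
    rw [Finset.sum_ite_mem, Finset.univ_inter, Finset.sum_const, nsmul_eq_mul]
    field_simp
  rw [hent]
  apply aux_capacity_le_logb hP
  intro U hU
  have hsub : U ⊆ S := by
    intro m hm
    have := hU.1 m hm
    rw [hPdef m] at this
    by_contra h
    simp [h] at this
  exact_mod_cast Finset.card_le_card hsub

/- ### Binomial case: incompatible with being a distribution -/

lemma aux_bin {N : ℕ} {P : Fin N → ℝ} (hP : IsDistNN P) (hB : IsBin P) : False := by
  obtain ⟨p, hp0, hp1, π, hdef⟩ := hB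
  set q : ℝ := 1 - p with hq
  have hq0 : 0 < q := by simp [hq]; linarith
  have hsum : ∑ m, P m = ∑ k : Fin N, P (π k) := (Equiv.sum_comp π P).symm
  have h2 : ∑ k : Fin N, P (π k) =
      ∑ k ∈ Finset.range N, (N.choose (k + 1) : ℝ) * p ^ (k + 1) * q ^ (N - (k + 1)) := by
    rw [← Fin.sum_univ_eq_sum_range (fun k => (N.choose (k + 1) : ℝ) * p ^ (k + 1) * q ^ (N - (k + 1)))]
    exact Finset.sum_congr rfl fun k _ => hdef k
  have h3 : (p + q) ^ N =
      ∑ k ∈ Finset.range (N + 1), p ^ k * q ^ (N - k) * (N.choose k : ℝ) := add_pow p q N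
  have h4 : ∑ k ∈ Finset.range (N + 1), p ^ k * q ^ (N - k) * (N.choose k : ℝ)
      = (∑ k ∈ Finset.range N, p ^ (k + 1) * q ^ (N - (k + 1)) * (N.choose (k + 1) : ℝ))
        + q ^ N := by
    rw [Finset.sum_range_succ' (fun k => p ^ k * q ^ (N - k) * (N.choose k : ℝ)) N]
    simp
  have hpq : p + q = 1 := by simp [hq]
  have h5 : ∑ k ∈ Finset.range N, (N.choose (k + 1) : ℝ) * p ^ (k + 1) * q ^ (N - (k + 1))
      = 1 - q ^ N := by
    have := h3
    rw [hpq, one_pow, h4] at this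
    have heq : ∑ k ∈ Finset.range N, (N.choose (k + 1) : ℝ) * p ^ (k + 1) * q ^ (N - (k + 1))
        = ∑ k ∈ Finset.range N, p ^ (k + 1) * q ^ (N - (k + 1)) * (N.choose (k + 1) : ℝ) :=
      Finset.sum_congr rfl fun k _ => by ring
    rw [heq]
    linarith
  have h6 : (1 : ℝ) - q ^ N = 1 := by rw [← h5, ← h2, ← hsum, hP.2]
  have hqN : q ^ N = 0 := by linarith
  exact absurd hqN (ne_of_gt (pow_pos hq0 N))

/- ### Geometric case -/

lemma aux_geo {N : ℕ} {P : Fin N → ℝ} (hP : IsDistNN P) (hG : IsGeo P) :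
    capacity P ≤ entropy P + 2 := by
  classical
  obtain ⟨α, hα0, hα1, π, hrec⟩ := hG
  have hN : 0 < N := by
    rcases Nat.eq_zero_or_pos N with h | h
    · subst h
      have := hP.2
      simp at this
    · exact h
  set c₀ : ℝ := P (π ⟨0, hN⟩) with hc₀def
  have key : ∀ k (hk : k < N), P (π ⟨k, hk⟩) = α ^ k * c₀ := by
    intro k
    induction k with
    | zero => intro hk; simp [hc₀def]
    | succ n ih =>
      intro hk
      rw [hrec n hk, ih (Nat.lt_of_succ_lt hk), pow_succ]
      ring
  have hpt : ∀ m, P m = α ^ ((π.symm m : Fin N) : ℕ) * c₀ := by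
    intro m
    have := key ((π.symm m : Fin N) : ℕ) (π.symm m).isLt
    simpa using this
  have hc₀pos : 0 < c₀ := by
    obtain ⟨m, hm⟩ := aux_exists_pos hP
    rw [hpt m] at hm
    by_contra h
    push_neg at h
    nlinarith [pow_pos hα0 ((π.symm m : Fin N) : ℕ)]
  have hppos : ∀ m, 0 < P m := fun m => by
    rw [hpt m]; positivity
  have hsum1 : (∑ k ∈ Finset.range N, α ^ k) * c₀ = 1 := by
    rw [Finset.sum_mul, ← hP.2,
      ← Fin.sum_univ_eq_sum_range (fun k => α ^ k * c₀) N,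
      ← Equiv.sum_comp π.symm (fun j : Fin N => α ^ (j : ℕ) * c₀)]
    exact (Finset.sum_congr rfl fun m _ => hpt m).symm
  have hc₀le1 : c₀ ≤ 1 := by
    rw [← hP.2]
    exact Finset.single_le_sum (fun m _ => hP.1 m) (Finset.mem_univ _)
  have hPle : ∀ m, P m ≤ c₀ := by
    intro m
    rw [hpt m]
    calc α ^ ((π.symm m : Fin N) : ℕ) * c₀ ≤ 1 * c₀ :=
          mul_le_mul_of_nonneg_right (pow_le_one₀ hα0.le hα1.le) hc₀pos.le
      _ = c₀ := one_mul _
  have hent_ge : Real.logb 2 (1 / c₀) ≤ entropy P := by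
    rw [entropy]
    calc Real.logb 2 (1 / c₀) = ∑ m, P m * Real.logb 2 (1 / c₀) := by
          rw [← Finset.sum_mul, hP.2, one_mul]
      _ ≤ ∑ m, P m * Real.logb 2 (1 / P m) := by
          refine Finset.sum_le_sum fun m _ => mul_le_mul_of_nonneg_left ?_ (hP.1 m)
          exact (Real.logb_le_logb one_lt_two (one_div_pos.mpr hc₀pos)
            (one_div_pos.mpr (hppos m))).2
            (one_div_le_one_div_of_le (hppos m) (hPle m))
  have hent0 : 0 ≤ entropy P := by
    refine Finset.sum_nonneg fun m _ => mul_nonneg (hP.1 m) ?_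
    refine Real.logb_nonneg one_lt_two ?_
    rw [le_div_iff₀ (hppos m), one_mul]
    exact (hPle m).trans hc₀le1
  set β : ℝ := -Real.logb 2 α with hβdef
  have hβpos : 0 < β := neg_pos.2 (Real.logb_neg one_lt_two hα0 hα1)
  have hlog : ∀ m, Real.logb 2 (P m) =
      ((π.symm m : Fin N) : ℕ) * Real.logb 2 α + Real.logb 2 c₀ := by
    intro m
    rw [hpt m, Real.logb_mul (pow_ne_zero _ hα0.ne') hc₀pos.ne', Real.logb_pow]
  -- unit set cardinality bound
  have hUb : ∀ U : Finset (Fin N), IsUnitSet P U →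
      (U.card : ℝ) ≤ min (N : ℝ) (1 / β + 1) := by
    intro U hU
    rw [le_min_iff]
    constructor
    · have : U.card ≤ N := by
        simpa using Finset.card_le_card (Finset.subset_univ U)
      exact_mod_cast this
    rcases U.eq_empty_or_nonempty with hUe | hUe
    · subst hUe; simp; positivity
    set f : Fin N → ℕ := fun m => ((π.symm m : Fin N) : ℕ) with hfdef
    have hf : Function.Injective f := by
      intro a b h
      exact π.symm.injective (Fin.val_injective h)
    set V := U.image f with hVdef
    have hVcard : V.card = U.card := Finset.card_image_of_injective U hf
    have hVne : V.Nonempty := hUe.image f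
    set a := V.min' hVne with hadef
    obtain ⟨ma, hma, hfa⟩ := Finset.mem_image.mp (V.min'_mem hVne)
    have hVsub : V ⊆ Finset.Icc a (a + ⌊1/β⌋₊) := by
      intro k hk
      obtain ⟨mk, hmk, hfk⟩ := Finset.mem_image.mp hk
      have hak : a ≤ k := V.min'_le k hk
      refine Finset.mem_Icc.mpr ⟨hak, ?_⟩
      have h1 := hU.2 mk hmk ma hma
      rw [hlog mk, hlog ma] at h1
      rw [hfdef] at hfk hfa
      simp only at hfk hfa
      rw [hfk, hfa] at h1
      have heq : ((k : ℝ) * Real.logb 2 α + Real.logb 2 c₀) -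
          ((a : ℝ) * Real.logb 2 α + Real.logb 2 c₀) = -(((k : ℝ) - a) * β) := by
        rw [hβdef]; ring
      rw [heq, abs_neg] at h1
      have hka : (0 : ℝ) ≤ (k : ℝ) - a := by
        rw [sub_nonneg]; exact_mod_cast hak
      rw [abs_of_nonneg (mul_nonneg hka hβpos.le)] at h1
      have h3 : ((k - a : ℕ) : ℝ) ≤ 1 / β := by
        rw [Nat.cast_sub hak, le_div_iff₀ hβpos]
        exact h1
      have h4 : k - a ≤ ⌊1/β⌋₊ := Nat.le_floor h3
      omega
    have hfl : (⌊1/β⌋₊ : ℝ) ≤ 1/β := Nat.floor_le (by positivity)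
    calc (U.card : ℝ) = (V.card : ℝ) := by rw [hVcard]
      _ ≤ ((Finset.Icc a (a + ⌊1/β⌋₊)).card : ℝ) := by
          exact_mod_cast Finset.card_le_card hVsub
      _ = (⌊1/β⌋₊ : ℝ) + 1 := by
          have hcc : a + ⌊1/β⌋₊ + 1 - a = ⌊1/β⌋₊ + 1 := by omega
          rw [Nat.card_Icc, hcc]
          push_cast
          ring
      _ ≤ 1/β + 1 := by linarith
  have hcap := aux_capacity_le_logb hP hUb
  refine hcap.trans ?_
  have hNpos : (0 : ℝ) < N := by exact_mod_cast hN
  have hBpos : 0 < min (N : ℝ) (1 / β + 1) := lt_min hNpos (by positivity)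
  rcases le_or_gt 1 β with hβ1 | hβ1
  · -- β ≥ 1 : min ≤ 2
    have h1β : 1/β ≤ 1 := by rw [div_le_one hβpos]; exact hβ1
    have hBle : min (N : ℝ) (1/β + 1) ≤ 2 := (min_le_right _ _).trans (by linarith)
    have := (Real.logb_le_logb one_lt_two hBpos (by norm_num)).2 hBle
    rw [Real.logb_self_eq_one one_lt_two] at this
    linarith
  rcases le_or_gt (α ^ N) (1/2) with hcase | hcase
  · -- case A : α^N ≤ 1/2, hence c₀ ≤ 2(1-α) ≤ 2β
    have hgs : ∑ k ∈ Finset.range N, α ^ k = (α ^ N - 1)/(α - 1) := geom_sum_eq hα1.ne N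
    have hα1ne : α - 1 ≠ 0 := by linarith
    have hkey : (1 - α ^ N) * c₀ = 1 - α := by
      rw [hgs] at hsum1
      field_simp at hsum1
      linarith
    -- 1 - α ≤ β * log 2
    have hlogα : Real.log α = -β * Real.log 2 := by
      rw [hβdef, Real.logb]
      field_simp
    have hαexp : α = Real.exp (-β * Real.log 2) := by
      rw [← hlogα, Real.exp_log hα0]
    have h1α : 1 - α ≤ β * Real.log 2 := by
      have := Real.add_one_le_exp (-β * Real.log 2)
      rw [← hαexp] at this
      linarith
    have hlog2le : Real.log 2 ≤ 1 := by
      have := Real.log_two_lt_d9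
      linarith
    have hc2β : c₀ ≤ 2 * β := by nlinarith
    have h1β : (1:ℝ) ≤ 1/β := by rw [le_div_iff₀ hβpos]; linarith
    have hBle : min (N : ℝ) (1/β + 1) ≤ 2/β := by
      have : (2:ℝ)/β = 1/β + 1/β := by ring
      rw [this]
      exact (min_le_right _ _).trans (by linarith)
    have hlogb4 : Real.logb 2 4 = 2 := by
      rw [show (4:ℝ) = 2 ^ (2:ℕ) by norm_num, Real.logb_pow,
        Real.logb_self_eq_one one_lt_two]
      norm_num
    calc Real.logb 2 (min (N : ℝ) (1/β + 1))
        ≤ Real.logb 2 (2/β) :=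
          (Real.logb_le_logb one_lt_two hBpos (by positivity)).2 hBle
      _ = 2 + Real.logb 2 (1/(2*β)) := by
          rw [show (2:ℝ)/β = 4 * (1/(2*β)) by field_simp; ring,
            Real.logb_mul (by norm_num) (by positivity), hlogb4]
      _ ≤ 2 + Real.logb 2 (1/c₀) := by
          have hle : (1:ℝ)/(2*β) ≤ 1/c₀ :=
            one_div_le_one_div_of_le hc₀pos hc2β
          have := (Real.logb_le_logb one_lt_two (by positivity) (by positivity)).2 hle
          linarith
      _ ≤ 2 + entropy P := by linarith
      _ = entropy P + 2 := by ring
  · -- case B : α^N > 1/2, nearly flat; c₀ N < 2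
    have hsumge : (N : ℝ) * α ^ N ≤ ∑ k ∈ Finset.range N, α ^ k := by
      calc (N : ℝ) * α ^ N = ∑ _k ∈ Finset.range N, α ^ N := by
            rw [Finset.sum_const, Finset.card_range, nsmul_eq_mul]
        _ ≤ _ := Finset.sum_le_sum fun k hk =>
            pow_le_pow_of_le_one hα0.le hα1.le (Finset.mem_range.mp hk).le
    have hc₀N : c₀ * N < 2 := by nlinarith
    have h1 : (N : ℝ)/2 ≤ 1/c₀ := by
      rw [div_le_div_iff₀ (by norm_num) hc₀pos]
      nlinarith
    have h2 : Real.logb 2 ((N:ℝ)/2) ≤ entropy P :=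
      le_trans ((Real.logb_le_logb one_lt_two (by positivity) (by positivity)).2 h1) hent_ge
    have h3 : Real.logb 2 ((N:ℝ)/2) = Real.logb 2 N - 1 := by
      rw [Real.logb_div (ne_of_gt hNpos) (by norm_num),
        Real.logb_self_eq_one one_lt_two]
    calc Real.logb 2 (min (N : ℝ) (1/β + 1))
        ≤ Real.logb 2 N :=
          (Real.logb_le_logb one_lt_two hBpos hNpos).2 (min_le_left _ _)
      _ ≤ entropy P + 2 := by linarith


/- ### Main theorem -/

/-- There is a universal constant `C` such that
`𝒞(P) ≤ H(P) + C` for every `P ∈ Flat_N ∪ Geo_N ∪ Bin_N`; moreover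
`𝒞(P) ≤ H(P)` for flat `P`. -/
theorem capacity_le_entropy_natural :
    ∃ C : ℝ, 0 < C ∧
      (∀ (N : ℕ) (P : Fin N → ℝ), IsDistNN P → InNatFam P →
        capacity P ≤ entropy P + C) ∧
      (∀ (N : ℕ) (P : Fin N → ℝ), IsDistNN P → IsFlat P →
        capacity P ≤ entropy P) := by
  refine ⟨2, by norm_num, ?_, fun N P hP hF => aux_flat hP hF⟩
  intro N P hP hfam
  rcases hfam with hF | hG | hB
  · have := aux_flat hP hF
    linarith
  · exact aux_geo hP hG
  · exact absurd hB (fun h => aux_bin hP h)
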